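/- arXiv:2302.04748 — 3 statements merged into one kernel-verified Lean document; each statement's English description precedes it below -/
import Mathlib

section
/- Let z = (L, ξ) with L > 0, where ξ ∈ W^{1,∞}(]0,1[, ℝ²), and suppose there exist u ∈ ℝ² and c > 0 with ξ_τ(τ)ᵀ u ≥ c for almost all τ. Then the linear map h'(z) : ℝ × W^{1,∞}₀(]0,1[,ℝ²) → L^∞(]0,1[) given by h'(z)[δL, δξ] = 2 ξ_τᵀ δξ_τ − 2 L δL is surjective. -/
/-!
Take `δξ_τ := φ • u` with `φ := (f + δ) / (2 ξ_τᵀu)`, so that `2 ξ_τᵀ δξ_τ = f + δ` and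
`δL := δ / (2L)` cancels the constant. Since `ξ_τᵀu ≥ c > 0`, `φ` is essentially bounded, and
`∫ φ` is affine in `δ` with slope `∫ 1 / (2 ξ_τᵀu) > 0`, so some `δ` makes `∫ δξ_τ = 0`.
-/

open MeasureTheory
open scoped RealInnerProductSpace

section
variable {α : Type*} [MeasurableSpace α] {μ : Measure α}

lemma integral_pos_of_ae_pos [NeZero μ] {g : α → ℝ} (hg : Integrable g μ)
    (hpos : ∀ᵐ x ∂μ, 0 < g x) : 0 < ∫ x, g x ∂μ := by
  rw [integral_pos_iff_support_of_nonneg_ae (hpos.mono fun _ hx ↦ hx.le) hg]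
  have hsupp : Function.support g =ᵐ[μ] Set.univ :=
    ae_eq_univ.2 <| measure_mono_null (fun x hx ↦ by simp_all) (ae_iff.1 hpos)
  rw [measure_congr hsupp]
  exact Measure.measure_univ_pos.2 (NeZero.ne μ)

lemma ae_abs_div_le {f g : α → ℝ} {Cf c : ℝ} (hc : 0 < c)
    (hf : ∀ᵐ x ∂μ, |f x| ≤ Cf) (hg : ∀ᵐ x ∂μ, c ≤ g x) :
    ∀ᵐ x ∂μ, |f x / g x| ≤ Cf / c := by
  filter_upwards [hf, hg] with x hfx hgx
  rw [abs_div, abs_of_pos (hc.trans_le hgx)]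
  exact div_le_div₀ ((abs_nonneg _).trans hfx) hfx hc hgx

lemma integrable_div_of_ae_le [IsFiniteMeasure μ] {f g : α → ℝ} {Cf c : ℝ}
    (hfm : AEMeasurable f μ) (hgm : AEMeasurable g μ) (hc : 0 < c)
    (hf : ∀ᵐ x ∂μ, |f x| ≤ Cf) (hg : ∀ᵐ x ∂μ, c ≤ g x) :
    Integrable (fun x ↦ f x / g x) μ :=
  .of_bound (hfm.div hgm).aestronglyMeasurable _ (ae_abs_div_le hc hf hg)

lemma exists_integral_add_const_div_eq_zero [IsFiniteMeasure μ] [NeZero μ] {f g : α → ℝ}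
    {Cf c : ℝ} (hfm : AEMeasurable f μ) (hgm : AEMeasurable g μ) (hc : 0 < c)
    (hf : ∀ᵐ x ∂μ, |f x| ≤ Cf) (hg : ∀ᵐ x ∂μ, c ≤ g x) :
    ∃ δ : ℝ, ∫ x, (f x + δ) / g x ∂μ = 0 := by
  have hfg := integrable_div_of_ae_le hfm hgm hc hf hg
  have hone : ∀ᵐ x ∂μ, |(1 : ℝ)| ≤ 1 := .of_forall fun _ ↦ le_of_eq abs_one
  have h1g := integrable_div_of_ae_le aemeasurable_const hgm hc hone hg
  have hJ : 0 < ∫ x, 1 / g x ∂μ :=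
    integral_pos_of_ae_pos h1g (hg.mono fun x hx ↦ one_div_pos.2 (hc.trans_le hx))
  refine ⟨-(∫ x, f x / g x ∂μ) / ∫ x, 1 / g x ∂μ, ?_⟩
  have hsplit : ∀ δ : ℝ, (fun x ↦ (f x + δ) / g x) = fun x ↦ f x / g x + δ * (1 / g x) := by
    intro δ; funext x; ring
  rw [hsplit, integral_add hfg (h1g.const_mul _), integral_const_mul]
  field_simp
  ring

end

theorem constraint_derivative_surjective_general
    (ξτ : ℝ → EuclideanSpace ℝ (Fin 2)) (L : ℝ) (hL : 0 < L)
    (hξτmeas : AEMeasurable ξτ (volume.restrict (Set.Ioo (0:ℝ) 1)))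
    (u : EuclideanSpace ℝ (Fin 2)) (c : ℝ) (hc : 0 < c)
    (hb : ∀ᵐ τ ∂(volume.restrict (Set.Ioo (0:ℝ) 1)), c ≤ ⟪ξτ τ, u⟫)
    (f : ℝ → ℝ)
    (hfmeas : AEMeasurable f (volume.restrict (Set.Ioo (0:ℝ) 1)))
    (Cf : ℝ) (hfbdd : ∀ᵐ τ ∂(volume.restrict (Set.Ioo (0:ℝ) 1)), |f τ| ≤ Cf) :
    ∃ (δL : ℝ) (δξτ : ℝ → EuclideanSpace ℝ (Fin 2)),
      AEMeasurable δξτ (volume.restrict (Set.Ioo (0:ℝ) 1)) ∧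
      (∃ C : ℝ, ∀ᵐ τ ∂(volume.restrict (Set.Ioo (0:ℝ) 1)), ‖δξτ τ‖ ≤ C) ∧
      (∫ τ in Set.Ioo (0:ℝ) 1, δξτ τ) = 0 ∧
      ∀ᵐ τ ∂(volume.restrict (Set.Ioo (0:ℝ) 1)),
        2 * ⟪ξτ τ, δξτ τ⟫ - 2 * L * δL = f τ := by
  set μ := volume.restrict (Set.Ioo (0:ℝ) 1)
  have : NeZero μ := ⟨by simp [μ, Measure.restrict_eq_zero]⟩
  set g : ℝ → ℝ := fun τ ↦ 2 * ⟪ξτ τ, u⟫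
  have hgm : AEMeasurable g μ := (hξτmeas.inner aemeasurable_const).const_mul 2
  have hc₂ : 0 < 2 * c := by positivity
  have hg : ∀ᵐ τ ∂μ, 2 * c ≤ g τ := hb.mono fun _ h ↦ by linarith
  obtain ⟨δ, hδ⟩ := exists_integral_add_const_div_eq_zero hfmeas hgm hc₂ hfbdd hg
  have hfδ : ∀ᵐ τ ∂μ, |f τ + δ| ≤ Cf + |δ| :=
    hfbdd.mono fun τ h ↦ (abs_add_le _ _).trans (by linarith)
  refine ⟨δ / (2 * L), fun τ ↦ ((f τ + δ) / g τ) • u,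
    ((hfmeas.add_const δ).div hgm).smul_const u, ⟨(Cf + |δ|) / (2 * c) * ‖u‖, ?_⟩, ?_, ?_⟩
  · filter_upwards [ae_abs_div_le hc₂ hfδ hg] with τ h
    rw [norm_smul, Real.norm_eq_abs]
    gcongr
  · rw [integral_smul_const, hδ, zero_smul]
  · filter_upwards [hg] with τ h
    have : g τ ≠ 0 := (hc₂.trans_le h).ne'
    rw [real_inner_smul_right]
    field_simp
    ring

/-- Surjectivity of the constraint derivative: if `L > 0` and `ξ_τᵀu ≥ c > 0` a.e.
(with `ξ_τ` essentially bounded), then for every `f ∈ L^∞(]0,1[)` there exist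
`δL ∈ ℝ` and an essentially bounded `δξ_τ` with `∫₀¹ δξ_τ = 0`
(i.e. `δξ ∈ W^{1,∞}₀`) such that `2 ξ_τᵀ δξ_τ − 2 L δL = f` a.e. -/
theorem constraint_derivative_surjective
    (ξτ : ℝ → EuclideanSpace ℝ (Fin 2)) (L : ℝ) (hL : 0 < L)
    (hξτmeas : AEMeasurable ξτ (volume.restrict (Set.Ioo (0:ℝ) 1)))
    (Cξ : ℝ) (hξτbdd : ∀ᵐ τ ∂(volume.restrict (Set.Ioo (0:ℝ) 1)), ‖ξτ τ‖ ≤ Cξ)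
    (u : EuclideanSpace ℝ (Fin 2)) (c : ℝ) (hc : 0 < c)
    (hb : ∀ᵐ τ ∂(volume.restrict (Set.Ioo (0:ℝ) 1)), c ≤ ⟪ξτ τ, u⟫)
    (f : ℝ → ℝ)
    (hfmeas : AEMeasurable f (volume.restrict (Set.Ioo (0:ℝ) 1)))
    (Cf : ℝ) (hfbdd : ∀ᵐ τ ∂(volume.restrict (Set.Ioo (0:ℝ) 1)), |f τ| ≤ Cf) :
    ∃ (δL : ℝ) (δξτ : ℝ → EuclideanSpace ℝ (Fin 2)),
      AEMeasurable δξτ (volume.restrict (Set.Ioo (0:ℝ) 1)) ∧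
      (∃ C : ℝ, ∀ᵐ τ ∂(volume.restrict (Set.Ioo (0:ℝ) 1)), ‖δξτ τ‖ ≤ C) ∧
      (∫ τ in Set.Ioo (0:ℝ) 1, δξτ τ) = 0 ∧
      ∀ᵐ τ ∂(volume.restrict (Set.Ioo (0:ℝ) 1)),
        2 * ⟪ξτ τ, δξτ τ⟫ - 2 * L * δL = f τ :=
  constraint_derivative_surjective_general ξτ L hL hξτmeas u c hc hb f hfmeas Cf hfbdd
end

section
/- Let b ∈ L^∞(]0,1[) with c − R ≤ b(τ) ≤ B almost everywhere for constants 0 < c − R ≤ B, let λ ∈ L²(]0,1[) with decomposition λ = λ̲ + λ̄ into mean-free part and mean. Define δξ_τ := (1/2) λ̲ u for a fixed unit vector u ∈ ℝ², and δL := (1/(2L)) (∫₀¹ b λ̲ dτ − (c−R) λ̄) for L > 0. Then ∫₀¹ (2 b (1/2) λ̲ λ − 2 L δL λ) dτ ≥ (c − R) ‖λ‖²_{L²}. -/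
/-!
With `λ̄ = ∫ λ` and `λ̲ = λ - λ̄`, the choice of `δL` makes the cross term `λ̄ ∫ b λ̲` cancel, so the
left-hand side equals `∫ b λ̲² + (c - R) λ̄²`. The bound `b ≥ c - R` and the variance identity
`∫ λ̲² = ∫ λ² - λ̄²` then give `(c - R) ∫ λ²`.
-/

open MeasureTheory ProbabilityTheory

section

variable {α : Type*} [MeasurableSpace α] {μ : Measure α} {f b g : α → ℝ} {k : ℝ}

theorem integral_sub_integral_sq [IsProbabilityMeasure μ] (hf : Integrable f μ)
    (hf2 : Integrable (fun x => f x ^ 2) μ) :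
    ∫ x, (f x - ∫ y, f y ∂μ) ^ 2 ∂μ = ∫ x, f x ^ 2 ∂μ - (∫ x, f x ∂μ) ^ 2 := by
  have hf_memLp : MemLp f 2 μ := (memLp_two_iff_integrable_sq hf.aestronglyMeasurable).2 hf2
  rw [← variance_eq_integral hf.aemeasurable, variance_eq_sub hf_memLp]
  rfl

theorem mul_integral_sq_le_integral_mul_sq (hb : ∀ᵐ x ∂μ, k ≤ b x)
    (hg2 : Integrable (fun x => g x ^ 2) μ) (hbg2 : Integrable (fun x => b x * g x ^ 2) μ) :
    k * ∫ x, g x ^ 2 ∂μ ≤ ∫ x, b x * g x ^ 2 ∂μ := by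
  rw [← integral_const_mul]
  refine integral_mono_ae (hg2.const_mul k) hbg2 ?_
  filter_upwards [hb] with x hx
  exact mul_le_mul_of_nonneg_right hx (sq_nonneg _)

theorem mul_integral_sq_le_of_ae_le [IsProbabilityMeasure μ] (hb : ∀ᵐ x ∂μ, k ≤ b x)
    (hf : Integrable f μ) (hf2 : Integrable (fun x => f x ^ 2) μ)
    (hbf : Integrable (fun x => b x * (f x - ∫ y, f y ∂μ)) μ)
    (hbff : Integrable (fun x => b x * (f x - ∫ y, f y ∂μ) * f x) μ) :
    k * ∫ x, f x ^ 2 ∂μ ≤ ∫ x, b x * (f x - ∫ y, f y ∂μ) * f x ∂μ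
      - ((∫ x, b x * (f x - ∫ y, f y ∂μ) ∂μ) - k * ∫ x, f x ∂μ) * ∫ x, f x ∂μ := by
  set m := ∫ x, f x ∂μ
  have hweighted : (fun x => b x * (f x - m) ^ 2)
      = fun x => b x * (f x - m) * f x - m * (b x * (f x - m)) := by
    funext x; ring
  have hdev2 : Integrable (fun x => (f x - m) ^ 2) μ :=
    (((memLp_two_iff_integrable_sq hf.aestronglyMeasurable).2 hf2).sub
      (memLp_const m)).integrable_sq
  have hbdev2 : Integrable (fun x => b x * (f x - m) ^ 2) μ := by
    rw [hweighted]
    exact hbff.sub (hbf.const_mul m)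
  have key := mul_integral_sq_le_integral_mul_sq hb hdev2 hbdev2
  rw [integral_sub_integral_sq hf hf2, hweighted, integral_sub hbff (hbf.const_mul m),
    integral_const_mul] at key
  linear_combination key

end

instance : IsProbabilityMeasure (volume.restrict (Set.Ioo (0 : ℝ) 1)) :=
  ⟨by simp [Real.volume_Ioo]⟩

theorem inf_sup_key_estimate_general
    (b lam : ℝ → ℝ) (c R B L : ℝ)
    (hL : 0 < L)
    (hb : ∀ᵐ τ ∂(volume.restrict (Set.Ioo (0:ℝ) 1)),
      c - R ≤ b τ ∧ b τ ≤ B)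
    (hlam : IntegrableOn lam (Set.Ioo (0:ℝ) 1))
    (hlamsq : IntegrableOn (fun τ => (lam τ) ^ 2) (Set.Ioo (0:ℝ) 1))
    (lbar : ℝ) (hlbar : lbar = ∫ τ in Set.Ioo (0:ℝ) 1, lam τ)
    (lt : ℝ → ℝ) (hlt : ∀ τ, lt τ = lam τ - lbar)
    (hblt : IntegrableOn (fun τ => b τ * lt τ) (Set.Ioo (0:ℝ) 1))
    (hbltl : IntegrableOn (fun τ => b τ * lt τ * lam τ) (Set.Ioo (0:ℝ) 1))
    (δL : ℝ)
    (hδL : δL = (1 / (2 * L)) *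
      ((∫ τ in Set.Ioo (0:ℝ) 1, b τ * lt τ) - (c - R) * lbar)) :
    (∫ τ in Set.Ioo (0:ℝ) 1,
        (2 * b τ * (1 / 2 * lt τ) * lam τ - 2 * L * δL * lam τ))
      ≥ (c - R) * ∫ τ in Set.Ioo (0:ℝ) 1, (lam τ) ^ 2 := by
  obtain rfl : lt = fun τ => lam τ - lbar := funext hlt
  have h2LδL : 2 * L * δL
      = (∫ τ in Set.Ioo (0:ℝ) 1, b τ * (lam τ - lbar)) - (c - R) * lbar := by
    rw [hδL]
    field_simp
  have hlhs : ∫ τ in Set.Ioo (0:ℝ) 1,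
        (2 * b τ * (1 / 2 * (lam τ - lbar)) * lam τ - 2 * L * δL * lam τ)
      = (∫ τ in Set.Ioo (0:ℝ) 1, b τ * (lam τ - lbar) * lam τ) - 2 * L * δL * lbar := by
    calc _ = ∫ τ in Set.Ioo (0:ℝ) 1, (b τ * (lam τ - lbar) * lam τ - 2 * L * δL * lam τ) := by
          congr 1
          funext τ
          ring
      _ = _ := by rw [integral_sub hbltl (hlam.const_mul _), integral_const_mul, ← hlbar]
  rw [ge_iff_le, hlhs, h2LδL]
  subst hlbar
  exact mul_integral_sq_le_of_ae_le (hb.mono fun _ h => h.1) hlam hlamsq hblt hbltl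

/-- Key computation in the inf-sup proof: with `b(τ) = ξ_τᵀu`, `c − R ≤ b ≤ B` a.e.,
`δξ_τ = (1/2)λ̲u` and `δL = (1/(2L))(∫b λ̲ − (c−R)λ̄)`, one has
`∫ (2b·(1/2)λ̲·λ − 2LδL·λ) ≥ (c−R)‖λ‖²_{L²}`. -/
theorem inf_sup_key_estimate
    (b lam : ℝ → ℝ) (c R B L : ℝ)
    (hcR : 0 < c - R) (hcRB : c - R ≤ B) (hL : 0 < L)
    (hbmeas : AEMeasurable b (volume.restrict (Set.Ioo (0:ℝ) 1)))
    (hb : ∀ᵐ τ ∂(volume.restrict (Set.Ioo (0:ℝ) 1)),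
      c - R ≤ b τ ∧ b τ ≤ B)
    (hlam : IntegrableOn lam (Set.Ioo (0:ℝ) 1))
    (hlamsq : IntegrableOn (fun τ => (lam τ) ^ 2) (Set.Ioo (0:ℝ) 1))
    (lbar : ℝ) (hlbar : lbar = ∫ τ in Set.Ioo (0:ℝ) 1, lam τ)
    (lt : ℝ → ℝ) (hlt : ∀ τ, lt τ = lam τ - lbar)
    (hblt : IntegrableOn (fun τ => b τ * lt τ) (Set.Ioo (0:ℝ) 1))
    (hbltl : IntegrableOn (fun τ => b τ * lt τ * lam τ) (Set.Ioo (0:ℝ) 1))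
    (δL : ℝ)
    (hδL : δL = (1 / (2 * L)) *
      ((∫ τ in Set.Ioo (0:ℝ) 1, b τ * lt τ) - (c - R) * lbar)) :
    (∫ τ in Set.Ioo (0:ℝ) 1,
        (2 * b τ * (1 / 2 * lt τ) * lam τ - 2 * L * δL * lam τ))
      ≥ (c - R) * ∫ τ in Set.Ioo (0:ℝ) 1, (lam τ) ^ 2 :=
  inf_sup_key_estimate_general b lam c R B L hL hb hlam hlamsq lbar hlbar lt hlt hblt hbltl δL hδL
end

section
/- Let L* > 0, and suppose R ≤ L*/2. Let λ ∈ L^∞(]0,1[) with ‖λ‖_{L^∞} ≤ R, and let ξ_τ with L* − R ≤ ‖ξ_τ(τ)‖ ≤ L* + R a.e., and L with L* − R ≤ L ≤ L* + R. Then for every δL ∈ ℝ and δξ_τ ∈ L²(]0,1[,ℝ²) with ξ_τᵀδξ_τ = L δL a.e.: ∫₀¹ λ (δξ_τᵀδξ_τ − δL²) dτ ≥ −10 R ‖δξ_τ‖²_{L²}. -/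
open MeasureTheory
open scoped RealInnerProductSpace

/-- Lower bound on the constraint Hessian term near a minimizer:
`∫₀¹ λ (δξ_τᵀδξ_τ − δL²) dτ ≥ −10 R ‖δξ_τ‖²_{L²}` on the linearized constraint kernel. -/
theorem constraint_hessian_lower_bound
    (Lstar R : ℝ) (hLstar : 0 < Lstar) (hR : R ≤ Lstar / 2) (hR0 : 0 ≤ R)
    (lam : ℝ → ℝ)
    (hlam : ∀ᵐ τ ∂(volume.restrict (Set.Ioo (0:ℝ) 1)), |lam τ| ≤ R)
    (ξτ : ℝ → EuclideanSpace ℝ (Fin 2))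
    (hξτ : ∀ᵐ τ ∂(volume.restrict (Set.Ioo (0:ℝ) 1)),
      Lstar - R ≤ ‖ξτ τ‖ ∧ ‖ξτ τ‖ ≤ Lstar + R)
    (L : ℝ) (hLlo : Lstar - R ≤ L) (hLhi : L ≤ Lstar + R)
    (δL : ℝ) (δξτ : ℝ → EuclideanSpace ℝ (Fin 2))
    (hδξτ : IntegrableOn (fun τ => ‖δξτ τ‖ ^ 2) (Set.Ioo (0:ℝ) 1))
    (hker : ∀ᵐ τ ∂(volume.restrict (Set.Ioo (0:ℝ) 1)), ⟪ξτ τ, δξτ τ⟫ = L * δL)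
    (hint : IntegrableOn (fun τ => lam τ * (⟪δξτ τ, δξτ τ⟫ - δL ^ 2))
      (Set.Ioo (0:ℝ) 1)) :
    ∫ τ in Set.Ioo (0:ℝ) 1, lam τ * (⟪δξτ τ, δξτ τ⟫ - δL ^ 2)
      ≥ -(10 * R) * ∫ τ in Set.Ioo (0:ℝ) 1, ‖δξτ τ‖ ^ 2 := by
  have h10 : IntegrableOn (fun τ => -(10 * R) * ‖δξτ τ‖ ^ 2) (Set.Ioo (0:ℝ) 1) :=
    hδξτ.const_mul _
  have hmono : ∀ᵐ τ ∂(volume.restrict (Set.Ioo (0:ℝ) 1)),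
      -(10 * R) * ‖δξτ τ‖ ^ 2 ≤ lam τ * (⟪δξτ τ, δξτ τ⟫ - δL ^ 2) := by
    filter_upwards [hlam, hξτ, hker] with τ h1 h2 h3
    have hnn : ⟪δξτ τ, δξτ τ⟫ = ‖δξτ τ‖ ^ 2 := real_inner_self_eq_norm_sq _
    have hLpos : 0 < Lstar - R := by linarith
    have hCS : |⟪ξτ τ, δξτ τ⟫| ≤ ‖ξτ τ‖ * ‖δξτ τ‖ := abs_real_inner_le_norm _ _
    have h4 : |L * δL| = L * |δL| := by
      rw [abs_mul, abs_of_nonneg (by linarith : (0:ℝ) ≤ L)]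
    have h5 : |δL| * (Lstar - R) ≤ (Lstar + R) * ‖δξτ τ‖ := by
      calc |δL| * (Lstar - R) ≤ |δL| * L := by
            have := abs_nonneg δL; nlinarith
        _ = |L * δL| := by rw [h4]; ring
        _ = |⟪ξτ τ, δξτ τ⟫| := by rw [h3]
        _ ≤ ‖ξτ τ‖ * ‖δξτ τ‖ := hCS
        _ ≤ (Lstar + R) * ‖δξτ τ‖ := mul_le_mul_of_nonneg_right h2.2 (norm_nonneg _)
    have h6 : |δL| ≤ 3 * ‖δξτ τ‖ := by
      have h7 : |δL| * (Lstar - R) ≤ 3 * (Lstar - R) * ‖δξτ τ‖ :=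
        le_trans h5 (by nlinarith [norm_nonneg (δξτ τ)])
      nlinarith
    have h9 : δL ^ 2 ≤ 9 * ‖δξτ τ‖ ^ 2 := by
      nlinarith [abs_nonneg δL, norm_nonneg (δξτ τ), sq_abs δL]
    rw [hnn]
    have hl := abs_le.mp h1
    nlinarith [sq_nonneg (‖δξτ τ‖), sq_nonneg δL]
  calc ∫ τ in Set.Ioo (0:ℝ) 1, lam τ * (⟪δξτ τ, δξτ τ⟫ - δL ^ 2)
      ≥ ∫ τ in Set.Ioo (0:ℝ) 1, -(10 * R) * ‖δξτ τ‖ ^ 2 :=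
        integral_mono_ae h10 hint hmono
    _ = -(10 * R) * ∫ τ in Set.Ioo (0:ℝ) 1, ‖δξτ τ‖ ^ 2 := integral_const_mul _ _
end
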